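/- arXiv:2602.10673 — 5 statements merged into one kernel-verified Lean document; each statement's English description precedes it below -/
import Mathlib

section
/- Let Y follow the univariate zero-inflated Poisson log-normal distribution ZIPLN(π, μ, σ²), and set E := π·exp(μ + σ²/2). Then the variance of Y satisfies Var(Y) = ∑_{y=0}^∞ y²·p(y) − E² = E + E²·(e^{σ²} − π)/π. -/
open MeasureTheory ProbabilityTheory Real

/-!
Conditionally on the Gaussian variable `z`, the Poisson log-normal component is Poisson with
intensity `x = exp (μ + z)`, whose second moment is `x + x²`. Summing over `y` under the integral
(all terms are nonnegative), `∑ y² p(y) = π (E[x] + E[x²])`, and the log-normal moments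
`E[x] = exp (μ + σ²/2)`, `E[x²] = exp (μ + σ²/2)² exp σ²` come from the Gaussian moment generating
function.
-/

/-- The probability mass function of the univariate zero-inflated Poisson log-normal
distribution ZIPLN(π, μ, σ²):
`p(y) = (1−π)·1{y=0} + π·∫ exp(−e^{μ+z})·e^{(μ+z)y}/y! dγ(z)`,
where `γ` is the centered Gaussian measure on ℝ with variance `σ²`.
Here `pr` plays the role of the zero-inflation probability π. -/
noncomputable def ziplnPMF (pr μ σ : ℝ) (y : ℕ) : ℝ :=
  (1 - pr) * (if y = 0 then 1 else 0) +
    pr * ∫ z, exp (-exp (μ + z)) * exp ((μ + z) * y) / (Nat.factorial y)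
        ∂(gaussianReal 0 ⟨σ ^ 2, sq_nonneg σ⟩)

open scoped Nat

noncomputable def plnPMF (μ : ℝ) (v : NNReal) (y : ℕ) : ℝ :=
  ∫ z, exp (-exp (μ + z)) * exp ((μ + z) * y) / (y !) ∂gaussianReal 0 v

lemma hasSum_natCast_mul_mul_pow_div_factorial (x : ℝ) {c : ℕ → ℝ} {s : ℝ}
    (h : HasSum (fun n ↦ c (n + 1) * (x ^ n / n !)) s) :
    HasSum (fun n ↦ n * c n * (x ^ n / n !)) (x * s) := by
  rw [← hasSum_nat_add_iff' 1]
  simp only [Finset.range_one, Finset.sum_singleton, Nat.cast_zero, zero_mul, sub_zero]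
  refine (h.mul_left x).congr_fun fun n ↦ ?_
  rw [Nat.factorial_succ, Nat.cast_mul, pow_succ]
  field_simp

lemma hasSum_natCast_sq_mul_pow_div_factorial (x : ℝ) :
    HasSum (fun n : ℕ ↦ (n : ℝ) ^ 2 * (x ^ n / n !)) ((x + x ^ 2) * exp x) := by
  have hexp : HasSum (fun n ↦ x ^ n / n !) (exp x) := by
    simpa [exp_eq_exp_ℝ] using NormedSpace.expSeries_div_hasSum_exp x
  have hmean : HasSum (fun n : ℕ ↦ (n : ℝ) * (x ^ n / n !)) (x * exp x) := by
    simpa using hasSum_natCast_mul_mul_pow_div_factorial x (c := 1) (by simpa using hexp)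
  have hsucc : HasSum (fun n : ℕ ↦ ((n + 1 : ℕ) : ℝ) * (x ^ n / n !)) (x * exp x + exp x) := by
    simpa [add_mul] using hmean.add hexp
  have hsq := hasSum_natCast_mul_mul_pow_div_factorial x hsucc
  rw [show x * (x * exp x + exp x) = (x + x ^ 2) * exp x by ring] at hsq
  exact hsq.congr_fun fun n ↦ by ring

lemma hasSum_natCast_sq_mul_poisson (x : ℝ) :
    HasSum (fun n : ℕ ↦ (n : ℝ) ^ 2 * (exp (-x) * x ^ n / n !)) (x + x ^ 2) := by
  have hx : exp (-x) * ((x + x ^ 2) * exp x) = x + x ^ 2 := by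
    rw [mul_left_comm, ← exp_add, neg_add_cancel, exp_zero, mul_one]
  exact hx ▸ ((hasSum_natCast_sq_mul_pow_div_factorial x).mul_left (exp (-x))).congr_fun
    fun n ↦ by ring

lemma hasSum_integral_of_nonneg {α ι : Type*} [MeasurableSpace α] [Countable ι] {μ : Measure α}
    {f : ι → α → ℝ} {F : α → ℝ} (hf : ∀ i, AEStronglyMeasurable (f i) μ)
    (hf₀ : ∀ i a, 0 ≤ f i a) (hF : ∀ a, HasSum (f · a) (F a)) (hFi : Integrable F μ) :
    HasSum (fun i ↦ ∫ a, f i a ∂μ) (∫ a, F a ∂μ) :=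
  hasSum_integral_of_dominated_convergence f hf
    (fun i ↦ ae_of_all _ fun a ↦ (Real.norm_of_nonneg (hf₀ i a)).le)
    (ae_of_all _ fun a ↦ (hF a).summable)
    (hFi.congr (ae_of_all _ fun a ↦ (hF a).tsum_eq.symm)) (ae_of_all _ hF)

section Gaussian

variable {m : ℝ} {v : NNReal}

lemma integrable_exp_mul_add_gaussianReal (t c : ℝ) :
    Integrable (fun x ↦ exp (t * (c + x))) (gaussianReal m v) := by
  simp_rw [mul_add, exp_add]
  exact (integrable_exp_mul_gaussianReal t).const_mul _

lemma integral_exp_mul_add_gaussianReal (t c : ℝ) :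
    ∫ x, exp (t * (c + x)) ∂gaussianReal m v = exp (t * (c + m) + v * t ^ 2 / 2) := by
  have hmgf : ∫ x, exp (t * x) ∂gaussianReal m v = exp (m * t + v * t ^ 2 / 2) :=
    congrFun mgf_fun_id_gaussianReal t
  simp_rw [mul_add, exp_add, integral_const_mul, hmgf, ← exp_add]
  ring_nf

end Gaussian

lemma hasSum_sq_mul_plnPMF (μ : ℝ) (v : NNReal) :
    HasSum (fun y : ℕ ↦ (y : ℝ) ^ 2 * plnPMF μ v y)
      (exp (μ + v / 2) + exp (μ + v / 2) ^ 2 * exp v) := by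
  have hpoisson (z : ℝ) : HasSum (fun y : ℕ ↦ (y : ℝ) ^ 2 *
      (exp (-exp (μ + z)) * exp ((μ + z) * y) / (y !)))
      (exp (1 * (μ + z)) + exp (2 * (μ + z))) := by
    have h := hasSum_natCast_sq_mul_poisson (exp (μ + z))
    rw [← exp_nat_mul] at h
    simpa only [one_mul, ← exp_nat_mul, mul_comm (μ + z), Nat.cast_ofNat] using h
  have hint (t : ℝ) := integrable_exp_mul_add_gaussianReal (m := 0) (v := v) t μ
  simp_rw [plnPMF, ← integral_const_mul]
  convert hasSum_integral_of_nonneg (fun y ↦ by fun_prop) (fun y z ↦ by positivity) hpoisson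
    ((hint 1).add (hint 2)) using 1
  rw [integral_add (hint 1) (hint 2), integral_exp_mul_add_gaussianReal,
    integral_exp_mul_add_gaussianReal, ← exp_nat_mul, ← exp_add]
  push_cast
  ring_nf

lemma sq_mul_ziplnPMF (pr μ σ : ℝ) (y : ℕ) :
    (y : ℝ) ^ 2 * ziplnPMF pr μ σ y = pr * ((y : ℝ) ^ 2 * plnPMF μ ⟨σ ^ 2, sq_nonneg σ⟩ y) := by
  rcases eq_or_ne y 0 with rfl | hy
  · simp
  · simp only [ziplnPMF, plnPMF, hy, if_false, mul_zero, zero_add]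
    ring

theorem zipln_variance_general (pr μ σ : ℝ)
    (E : ℝ) (hE : E = pr * exp (μ + σ ^ 2 / 2)) :
    (∑' y : ℕ, (y : ℝ) ^ 2 * ziplnPMF pr μ σ y) - E ^ 2
      = E + E ^ 2 * (exp (σ ^ 2) - pr) / pr := by
  have hsum : HasSum (fun y : ℕ ↦ (y : ℝ) ^ 2 * ziplnPMF pr μ σ y)
      (pr * (exp (μ + σ ^ 2 / 2) + exp (μ + σ ^ 2 / 2) ^ 2 * exp (σ ^ 2))) := by
    simp only [sq_mul_ziplnPMF]
    exact (hasSum_sq_mul_plnPMF μ _).mul_left pr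
  rw [hsum.tsum_eq, hE]
  rcases eq_or_ne pr 0 with rfl | hpr
  · simp
  · field_simp
    ring

/-- The variance of a ZIPLN(π, μ, σ²) random variable, with E := π·exp(μ + σ²/2),
is `Var(Y) = ∑ y²·p(y) − E² = E + E²·(e^{σ²} − π)/π`. -/
theorem zipln_variance (pr μ σ : ℝ) (hpr : pr ∈ Set.Ioc (0 : ℝ) 1) (hσ : 0 < σ)
    (E : ℝ) (hE : E = pr * exp (μ + σ ^ 2 / 2)) :
    (∑' y : ℕ, (y : ℝ) ^ 2 * ziplnPMF pr μ σ y) - E ^ 2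
      = E + E ^ 2 * (exp (σ ^ 2) - pr) / pr :=
  zipln_variance_general pr μ σ E hE
end

section
/- Let Y follow the univariate zero-inflated Poisson log-normal distribution ZIPLN(π, μ, σ²) with σ > 0. Then Y is overdispersed: Var(Y) > E[Y], i.e. ∑_{y=0}^∞ y²·p(y) − (∑_{y=0}^∞ y·p(y))² > ∑_{y=0}^∞ y·p(y). -/
/-!
Conditionally on the Gaussian variable `Z`, a non-inflated observation is Poisson with
intensity `Λ = exp (μ + Z)`, whose first two moments are `Λ` and `Λ + Λ²`. Hence
`E[Y] = π E[Λ]` and `E[Y²] = π (E[Λ] + E[Λ²])`, and the log-normal moments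
`E[Λᵏ] = exp (k μ + k² σ² / 2)` give `Var(Y) - E[Y] = π E[Λ²] - π² E[Λ]² ≥ π Var(Λ) > 0`.
-/

open MeasureTheory ProbabilityTheory Real

open Nat

lemma hasSum_pow_div_factorial (x : ℝ) : HasSum (fun n : ℕ => x ^ n / n !) (exp x) := by
  rw [exp_eq_exp_ℝ]
  exact NormedSpace.expSeries_div_hasSum_exp x

lemma hasSum_mul_pow_div_factorial (x : ℝ) :
    HasSum (fun n : ℕ => n * (x ^ n / n !)) (x * exp x) := by
  refine (hasSum_nat_add_iff' 1).mp ?_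
  convert! (hasSum_pow_div_factorial x).mul_left x using 1
  · ext n
    rw [factorial_succ, pow_succ]
    push_cast
    field_simp
  · simp

lemma hasSum_sq_mul_pow_div_factorial (x : ℝ) :
    HasSum (fun n : ℕ => (n : ℝ) ^ 2 * (x ^ n / n !)) ((x + x ^ 2) * exp x) := by
  refine (hasSum_nat_add_iff' 1).mp ?_
  convert! ((hasSum_mul_pow_div_factorial x).add (hasSum_pow_div_factorial x)).mul_left x
    using 1
  · ext n
    rw [factorial_succ, pow_succ]
    push_cast
    field_simp
    ring
  · simp
    ring

lemma hasSum_mul_poisson (x : ℝ) :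
    HasSum (fun n : ℕ => n * (exp (-x) * x ^ n / n !)) x := by
  convert! (hasSum_mul_pow_div_factorial x).mul_left (exp (-x)) using 1
  · ext n
    ring
  · rw [exp_neg]
    field_simp

lemma hasSum_sq_mul_poisson (x : ℝ) :
    HasSum (fun n : ℕ => (n : ℝ) ^ 2 * (exp (-x) * x ^ n / n !)) (x + x ^ 2) := by
  convert! (hasSum_sq_mul_pow_div_factorial x).mul_left (exp (-x)) using 1
  · ext n
    ring
  · rw [exp_neg]
    field_simp

lemma hasSum_integral_of_nonneg_s3 {α : Type*} [MeasurableSpace α] {μ : Measure α}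
    {f : ℕ → α → ℝ} {g : α → ℝ} (hf_meas : ∀ n, AEStronglyMeasurable (f n) μ)
    (hf_nonneg : ∀ n x, 0 ≤ f n x) (hsum : ∀ x, HasSum (fun n => f n x) (g x))
    (hg : Integrable g μ) :
    HasSum (fun n => ∫ x, f n x ∂μ) (∫ x, g x ∂μ) := by
  refine hasSum_integral_of_dominated_convergence f hf_meas
    (fun n => ae_of_all _ fun x => (norm_of_nonneg (hf_nonneg n x)).le)
    (ae_of_all _ fun x => (hsum x).summable) ?_ (ae_of_all _ hsum)
  simpa only [(hsum _).tsum_eq] using hg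

lemma exp_add_pow (m z : ℝ) (k : ℕ) : exp (m + z) ^ k = exp (k * m) * exp (k * z) := by
  rw [← exp_nat_mul, ← exp_add, mul_add]

section LogNormalMoments

variable (m σ : ℝ)

lemma integrable_exp_add_pow_gaussianReal (k : ℕ) :
    Integrable (fun z => exp (m + z) ^ k) (gaussianReal 0 ⟨σ ^ 2, sq_nonneg σ⟩) := by
  simp_rw [exp_add_pow]
  exact (integrable_exp_mul_gaussianReal _).const_mul _

lemma integral_exp_add_pow_gaussianReal (k : ℕ) :
    ∫ z, exp (m + z) ^ k ∂gaussianReal 0 ⟨σ ^ 2, sq_nonneg σ⟩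
      = exp (k * m + σ ^ 2 * k ^ 2 / 2) := by
  have hmgf := congrFun (mgf_fun_id_gaussianReal (μ := 0) (v := ⟨σ ^ 2, sq_nonneg σ⟩)) k
  simp only [mgf, zero_mul, zero_add] at hmgf
  simp_rw [exp_add_pow, integral_const_mul, exp_add, hmgf]
  rfl

lemma integrable_exp_add_gaussianReal :
    Integrable (fun z => exp (m + z)) (gaussianReal 0 ⟨σ ^ 2, sq_nonneg σ⟩) := by
  simpa using integrable_exp_add_pow_gaussianReal m σ 1

lemma integral_exp_add_gaussianReal :
    ∫ z, exp (m + z) ∂gaussianReal 0 ⟨σ ^ 2, sq_nonneg σ⟩ = exp (m + σ ^ 2 / 2) := by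
  simpa using integral_exp_add_pow_gaussianReal m σ 1

end LogNormalMoments

section ZIPLNMoments

variable (pr μ σ : ℝ)

lemma hasSum_mul_ziplnPMF {w : ℕ → ℝ} {g : ℝ → ℝ} (hw0 : w 0 = 0)
    (hw : ∀ n, 0 ≤ w n) (hg : ∀ x, HasSum (fun n => w n * (exp (-x) * x ^ n / n !)) (g x))
    (hint : Integrable (fun z => g (exp (μ + z))) (gaussianReal 0 ⟨σ ^ 2, sq_nonneg σ⟩)) :
    HasSum (fun n => w n * ziplnPMF pr μ σ n)
      (pr * ∫ z, g (exp (μ + z)) ∂gaussianReal 0 ⟨σ ^ 2, sq_nonneg σ⟩) := by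
  have hterm (n : ℕ) : w n * ziplnPMF pr μ σ n = pr * ∫ z,
      w n * (exp (-exp (μ + z)) * exp (μ + z) ^ n / n !)
        ∂gaussianReal 0 ⟨σ ^ 2, sq_nonneg σ⟩ := by
    cases n with
    | zero => simp [ziplnPMF, hw0]
    | succ n =>
      rw [ziplnPMF, if_neg (succ_ne_zero n), mul_zero, zero_add, mul_left_comm,
        ← integral_const_mul]
      simp_rw [mul_comm (μ + _), exp_nat_mul]
  simp_rw [hterm]
  exact (hasSum_integral_of_nonneg_s3 (fun n => by fun_prop)
    (fun n z => mul_nonneg (hw n) (by positivity)) (fun z => hg _) hint).mul_left pr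

lemma hasSum_natCast_mul_ziplnPMF :
    HasSum (fun n : ℕ => (n : ℝ) * ziplnPMF pr μ σ n) (pr * exp (μ + σ ^ 2 / 2)) := by
  rw [← integral_exp_add_gaussianReal]
  exact hasSum_mul_ziplnPMF pr μ σ (by simp) (fun n => n.cast_nonneg) hasSum_mul_poisson
    (integrable_exp_add_gaussianReal μ σ)

lemma hasSum_natCast_sq_mul_ziplnPMF :
    HasSum (fun n : ℕ => (n : ℝ) ^ 2 * ziplnPMF pr μ σ n)
      (pr * (exp (μ + σ ^ 2 / 2) + exp (2 * μ + 2 * σ ^ 2))) := by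
  have hint := integrable_exp_add_gaussianReal μ σ
  have hint₂ := integrable_exp_add_pow_gaussianReal μ σ 2
  have hmoment : ∫ z, exp (μ + z) + exp (μ + z) ^ 2 ∂gaussianReal 0 ⟨σ ^ 2, sq_nonneg σ⟩
      = exp (μ + σ ^ 2 / 2) + exp (2 * μ + 2 * σ ^ 2) := by
    rw [integral_add hint hint₂, integral_exp_add_gaussianReal, integral_exp_add_pow_gaussianReal]
    ring_nf
  rw [← hmoment]
  exact hasSum_mul_ziplnPMF pr μ σ (by simp) (fun n => sq_nonneg _) hasSum_sq_mul_poisson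
    (hint.add hint₂)

end ZIPLNMoments

/-- A ZIPLN(π, μ, σ²) random variable with σ > 0 is overdispersed:
`Var(Y) = E[Y²] − E[Y]² > E[Y]`. -/
theorem zipln_overdispersed (pr μ σ : ℝ) (hpr : pr ∈ Set.Ioc (0 : ℝ) 1) (hσ : 0 < σ) :
    (∑' y : ℕ, (y : ℝ) ^ 2 * ziplnPMF pr μ σ y)
        - (∑' y : ℕ, (y : ℝ) * ziplnPMF pr μ σ y) ^ 2
      > ∑' y : ℕ, (y : ℝ) * ziplnPMF pr μ σ y := by
  obtain ⟨hpr0, hpr1⟩ := hpr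
  have hvar : exp (μ + σ ^ 2 / 2) ^ 2 < exp (2 * μ + 2 * σ ^ 2) := by
    rw [← exp_nat_mul]
    exact exp_lt_exp.2 (by push_cast; nlinarith)
  rw [(hasSum_natCast_mul_ziplnPMF pr μ σ).tsum_eq,
    (hasSum_natCast_sq_mul_ziplnPMF pr μ σ).tsum_eq]
  nlinarith [mul_lt_mul_of_pos_left hvar hpr0,
    mul_le_mul_of_nonneg_right hpr1 (sq_nonneg (exp (μ + σ ^ 2 / 2)))]
end

section
/- Let Y follow the univariate zero-inflated Poisson log-normal distribution ZIPLN(π, μ, σ²), and set Q₁ = E[Y²]/E[Y] − 1 and Q₂ = E[Y³] − 3·E[Y²] + 2·E[Y]. Then the parameters are recovered from the first three moments by the formulas: π = Q₂/Q₁³, σ² = log(Q₂/(Q₁²·E[Y])), and μ = 4·log(Q₁) + (3/2)·log(E[Y]/Q₂). -/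
open MeasureTheory ProbabilityTheory Real

section ZiplnAux

open scoped NNReal ENNReal

lemma zipln_exp_tsum (x : ℝ) : Real.exp x = ∑' n : ℕ, x ^ n / n.factorial := by
  rw [Real.exp_eq_exp_ℝ, NormedSpace.exp_eq_tsum_div]

lemma zipln_desc_series (x : ℝ) (j : ℕ) :
    Summable (fun y : ℕ => (y.descFactorial j : ℝ) * x ^ y / y.factorial) ∧
    ∑' y : ℕ, (y.descFactorial j : ℝ) * x ^ y / y.factorial = x ^ j * Real.exp x := by
  induction j with
  | zero =>
    simp only [Nat.descFactorial_zero, Nat.cast_one, one_mul, pow_zero]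
    exact ⟨Real.summable_pow_div_factorial x, by rw [zipln_exp_tsum x]⟩
  | succ j ih =>
    have hshift : ∀ n : ℕ, ((n+1).descFactorial (j+1) : ℝ) * x ^ (n+1) / (n+1).factorial
        = x * ((n.descFactorial j : ℝ) * x ^ n / n.factorial) := by
      intro n
      rw [Nat.succ_descFactorial_succ, Nat.factorial_succ]
      have h1 : ((n:ℝ) + 1) ≠ 0 := by positivity
      have h2 : ((n.factorial : ℝ)) ≠ 0 := Nat.cast_ne_zero.mpr n.factorial_ne_zero
      push_cast
      field_simp
      ring
    have hs : Summable (fun y : ℕ => (y.descFactorial (j+1) : ℝ) * x ^ y / y.factorial) := by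
      refine (summable_nat_add_iff 1).mp ?_
      simp only [hshift]
      exact ih.1.mul_left x
    refine ⟨hs, ?_⟩
    rw [Summable.tsum_eq_zero_add hs]
    simp only [hshift, Nat.zero_descFactorial_succ, Nat.cast_zero, zero_mul, zero_div, zero_add]
    rw [tsum_mul_left, ih.2]
    ring

lemma zipln_desc2_cast (y : ℕ) : (y.descFactorial 2 : ℝ) = (y:ℝ)^2 - y := by
  cases y with
  | zero => simp
  | succ n =>
    rw [Nat.succ_descFactorial_succ, Nat.descFactorial_one]
    push_cast; ring

lemma zipln_desc3_cast (y : ℕ) : (y.descFactorial 3 : ℝ) = (y:ℝ)^3 - 3*(y:ℝ)^2 + 2*y := by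
  match y with
  | 0 => simp
  | 1 => norm_num [Nat.succ_descFactorial_succ]
  | (n+2) =>
    rw [Nat.succ_descFactorial_succ, Nat.succ_descFactorial_succ, Nat.descFactorial_one]
    push_cast; ring

lemma zipln_mom1 (x : ℝ) :
    Summable (fun y : ℕ => (y:ℝ) * x ^ y / y.factorial) ∧
    ∑' y : ℕ, (y:ℝ) * x ^ y / y.factorial = x * Real.exp x := by
  have h := zipln_desc_series x 1
  simpa [Nat.descFactorial_one] using h

lemma zipln_mom2 (x : ℝ) :
    Summable (fun y : ℕ => (y:ℝ)^2 * x ^ y / y.factorial) ∧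
    ∑' y : ℕ, (y:ℝ)^2 * x ^ y / y.factorial = (x + x^2) * Real.exp x := by
  have h2 := zipln_desc_series x 2
  have h1 := zipln_desc_series x 1
  have hfun : ∀ y : ℕ, (y:ℝ)^2 * x ^ y / y.factorial
      = (y.descFactorial 2 : ℝ) * x ^ y / y.factorial
        + (y.descFactorial 1 : ℝ) * x ^ y / y.factorial := by
    intro y
    rw [zipln_desc2_cast, Nat.descFactorial_one]
    ring
  constructor
  · simp only [hfun]; exact h2.1.add h1.1
  · simp only [hfun]
    rw [Summable.tsum_add h2.1 h1.1, h2.2, h1.2]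
    ring

lemma zipln_mom3 (x : ℝ) :
    Summable (fun y : ℕ => (y:ℝ)^3 * x ^ y / y.factorial) ∧
    ∑' y : ℕ, (y:ℝ)^3 * x ^ y / y.factorial = (x + 3*x^2 + x^3) * Real.exp x := by
  have h3 := zipln_desc_series x 3
  have h2 := zipln_desc_series x 2
  have h1 := zipln_desc_series x 1
  have hfun : ∀ y : ℕ, (y:ℝ)^3 * x ^ y / y.factorial
      = (y.descFactorial 3 : ℝ) * x ^ y / y.factorial
        + (3 * (y.descFactorial 2 : ℝ) * x ^ y / y.factorial
          + (y.descFactorial 1 : ℝ) * x ^ y / y.factorial) := by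
    intro y
    rw [zipln_desc3_cast, zipln_desc2_cast, Nat.descFactorial_one]
    ring
  have hs2 : Summable (fun y : ℕ => 3 * (y.descFactorial 2 : ℝ) * x ^ y / y.factorial) := by
    simp only [mul_assoc, mul_div_assoc]
    exact (h2.1.congr (fun y => by rw [mul_div_assoc])).mul_left 3
  constructor
  · simp only [hfun]; exact h3.1.add (hs2.add h1.1)
  · simp only [hfun]
    rw [Summable.tsum_add h3.1 (hs2.add h1.1), Summable.tsum_add hs2 h1.1, h3.2, h1.2]
    have : ∑' y : ℕ, 3 * (y.descFactorial 2 : ℝ) * x ^ y / y.factorial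
        = 3 * (x^2 * Real.exp x) := by
      rw [← h2.2, ← tsum_mul_left]
      exact tsum_congr fun y => by ring
    rw [this]
    ring

lemma zipln_pdf_shift (v : ℝ≥0) (hv : v ≠ 0) (t c x : ℝ) :
    gaussianPDFReal 0 v x * Real.exp (t * x + c)
      = Real.exp (c + v * t ^ 2 / 2) * gaussianPDFReal (t * v) v x := by
  have hv' : (0:ℝ) < v := by
    exact_mod_cast pos_iff_ne_zero.mpr hv
  simp only [gaussianPDFReal]
  rw [mul_assoc, ← Real.exp_add, mul_left_comm, ← Real.exp_add]
  congr 1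
  rw [Real.exp_eq_exp]
  field_simp
  ring

lemma zipln_lintegral_exp (v : ℝ≥0) (hv : v ≠ 0) (t c : ℝ) :
    ∫⁻ x, ENNReal.ofReal (Real.exp (t * x + c)) ∂(gaussianReal 0 v)
      = ENNReal.ofReal (Real.exp (c + v * t ^ 2 / 2)) := by
  rw [gaussianReal_of_var_ne_zero _ hv,
    lintegral_withDensity_eq_lintegral_mul _ (measurable_gaussianPDF 0 v)
      (by fun_prop)]
  have key : ∀ x : ℝ, gaussianPDF 0 v x * ENNReal.ofReal (Real.exp (t * x + c))
      = ENNReal.ofReal (Real.exp (c + v * t ^ 2 / 2))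
          * ENNReal.ofReal (gaussianPDFReal (t * v) v x) := by
    intro x
    rw [gaussianPDF, ← ENNReal.ofReal_mul (gaussianPDFReal_nonneg 0 v x),
      zipln_pdf_shift v hv t c x,
      ENNReal.ofReal_mul (Real.exp_nonneg _)]
  simp only [Pi.mul_apply, key]
  rw [lintegral_const_mul _ ((measurable_gaussianPDFReal (t * v) v).ennreal_ofReal),
    lintegral_gaussianPDFReal_eq_one (t * v) hv, mul_one]

lemma zipln_tsum_eq (μ : ℝ) (v : ℝ≥0) (w : ℕ → ℝ) (hw : ∀ y, 0 ≤ w y)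
    (P : ℝ → ℝ)
    (hsum : ∀ x : ℝ, 0 < x → Summable (fun y : ℕ => w y * x ^ y / y.factorial))
    (htsum : ∀ x : ℝ, 0 < x → ∑' y : ℕ, w y * x ^ y / y.factorial = P x * Real.exp x) :
    ∑' y : ℕ, w y * (∫ z, Real.exp (-Real.exp (μ + z)) * Real.exp ((μ + z) * y)
        / (y.factorial) ∂(gaussianReal 0 v))
      = (∫⁻ z, ENNReal.ofReal (P (Real.exp (μ + z))) ∂(gaussianReal 0 v)).toReal := by
  set γ := gaussianReal 0 v with hγ
  set F : ℕ → ℝ → ℝ :=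
    fun y z => w y * (Real.exp (-Real.exp (μ + z)) * Real.exp (μ + z) ^ y / y.factorial)
    with hF
  have hFmeas : ∀ y, Measurable (F y) := by intro y; fun_prop
  have hFnn : ∀ y z, 0 ≤ F y z := fun y z => mul_nonneg (hw y) (by positivity)
  have step1 : ∀ y : ℕ, w y * (∫ z, Real.exp (-Real.exp (μ + z)) * Real.exp ((μ + z) * y)
      / (y.factorial) ∂γ) = (∫⁻ z, ENNReal.ofReal (F y z) ∂γ).toReal := by
    intro y
    have hpt : ∀ z : ℝ, Real.exp (-Real.exp (μ + z)) * Real.exp ((μ + z) * y) / y.factorial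
        = Real.exp (-Real.exp (μ + z)) * Real.exp (μ + z) ^ y / y.factorial := by
      intro z; rw [mul_comm (μ + z) (y:ℝ), Real.exp_nat_mul]
    rw [show (∫ z, Real.exp (-Real.exp (μ + z)) * Real.exp ((μ + z) * y) / y.factorial ∂γ)
        = ∫ z, Real.exp (-Real.exp (μ + z)) * Real.exp (μ + z) ^ y / y.factorial ∂γ from
      integral_congr_ae (Filter.Eventually.of_forall hpt)]
    rw [← integral_const_mul]
    exact integral_eq_lintegral_of_nonneg_ae (Filter.Eventually.of_forall (hFnn y))
      (hFmeas y).aestronglyMeasurable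
  have step2 : ∀ y : ℕ, (∫⁻ z, ENNReal.ofReal (F y z) ∂γ) ≠ ⊤ := by
    intro y
    have hb : ∀ z, F y z ≤ w y := by
      intro z
      set x := Real.exp (μ + z) with hx
      have h1 : x ^ y / y.factorial ≤ Real.exp x := by
        rw [zipln_exp_tsum x]
        refine Summable.le_tsum (Real.summable_pow_div_factorial x) y fun j _ => by positivity
      have h2 : Real.exp (-x) * (x ^ y / y.factorial) ≤ Real.exp (-x) * Real.exp x :=
        mul_le_mul_of_nonneg_left h1 (Real.exp_nonneg _)
      have h3 : Real.exp (-x) * Real.exp x = 1 := by rw [← Real.exp_add]; simp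
      calc F y z = w y * (Real.exp (-x) * (x ^ y / y.factorial)) := by
            rw [hF]; dsimp only; rw [mul_div_assoc]
        _ ≤ w y * 1 := mul_le_mul_of_nonneg_left (h2.trans_eq h3) (hw y)
        _ = w y := mul_one _
    refine ne_top_of_le_ne_top (ENNReal.ofReal_ne_top (r := w y)) ?_
    calc ∫⁻ z, ENNReal.ofReal (F y z) ∂γ
        ≤ ∫⁻ _, ENNReal.ofReal (w y) ∂γ :=
          lintegral_mono fun z => ENNReal.ofReal_le_ofReal (hb z)
      _ = ENNReal.ofReal (w y) := by rw [lintegral_const, measure_univ, mul_one]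
  calc ∑' y : ℕ, w y * (∫ z, Real.exp (-Real.exp (μ + z)) * Real.exp ((μ + z) * y)
        / (y.factorial) ∂γ)
      = ∑' y : ℕ, (∫⁻ z, ENNReal.ofReal (F y z) ∂γ).toReal := tsum_congr step1
    _ = (∑' y : ℕ, ∫⁻ z, ENNReal.ofReal (F y z) ∂γ).toReal :=
        (ENNReal.tsum_toReal_eq step2).symm
    _ = (∫⁻ z, ∑' y : ℕ, ENNReal.ofReal (F y z) ∂γ).toReal := by
        rw [lintegral_tsum fun y => ((hFmeas y).ennreal_ofReal).aemeasurable]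
    _ = (∫⁻ z, ENNReal.ofReal (P (Real.exp (μ + z))) ∂γ).toReal := by
        congr 1
        refine lintegral_congr fun z => ?_
        set x := Real.exp (μ + z) with hx
        have hx0 : 0 < x := Real.exp_pos _
        have hFz : ∀ y : ℕ, F y z = Real.exp (-x) * (w y * x ^ y / y.factorial) := by
          intro y; rw [hF]; dsimp only; ring
        have hnn : ∀ y : ℕ, 0 ≤ Real.exp (-x) * (w y * x ^ y / y.factorial) :=
          fun y => mul_nonneg (Real.exp_nonneg _)
            (div_nonneg (mul_nonneg (hw y) (by positivity)) (by positivity))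
        calc ∑' y : ℕ, ENNReal.ofReal (F y z)
            = ∑' y : ℕ, ENNReal.ofReal (Real.exp (-x) * (w y * x ^ y / y.factorial)) :=
              tsum_congr fun y => by rw [hFz]
          _ = ENNReal.ofReal (∑' y : ℕ, Real.exp (-x) * (w y * x ^ y / y.factorial)) :=
              (ENNReal.ofReal_tsum_of_nonneg hnn ((hsum x hx0).mul_left _)).symm
          _ = ENNReal.ofReal (P x) := by
              rw [tsum_mul_left, htsum x hx0]
              congr 1
              have : Real.exp (-x) * (P x * Real.exp x)
                  = P x * (Real.exp (-x) * Real.exp x) := by ring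
              rw [this, ← Real.exp_add]
              simp

end ZiplnAux

/-- The parameters of a ZIPLN(π, μ, σ²) distribution are recovered from its first
three moments via `Q₁ = E[Y²]/E[Y] − 1` and `Q₂ = E[Y³] − 3E[Y²] + 2E[Y]`:
`π = Q₂/Q₁³`, `σ² = log(Q₂/(Q₁²·E[Y]))` and `μ = 4·log(Q₁) + (3/2)·log(E[Y]/Q₂)`. -/
theorem zipln_parameter_recovery (pr μ σ : ℝ) (hpr : pr ∈ Set.Ioc (0 : ℝ) 1) (hσ : 0 < σ)
    (m₁ Q₁ Q₂ : ℝ)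
    (hm₁ : m₁ = ∑' y : ℕ, (y : ℝ) * ziplnPMF pr μ σ y)
    (hQ₁ : Q₁ = (∑' y : ℕ, (y : ℝ) ^ 2 * ziplnPMF pr μ σ y) / m₁ - 1)
    (hQ₂ : Q₂ = (∑' y : ℕ, (y : ℝ) ^ 3 * ziplnPMF pr μ σ y)
        - 3 * (∑' y : ℕ, (y : ℝ) ^ 2 * ziplnPMF pr μ σ y)
        + 2 * (∑' y : ℕ, (y : ℝ) * ziplnPMF pr μ σ y)) :
    pr = Q₂ / Q₁ ^ 3 ∧
    σ ^ 2 = Real.log (Q₂ / (Q₁ ^ 2 * m₁)) ∧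
    μ = 4 * Real.log Q₁ + (3 / 2) * Real.log (m₁ / Q₂) := by
  have hp0 : 0 < pr := hpr.1
  have hσ2 : (0:ℝ) < σ ^ 2 := by positivity
  set v : NNReal := ⟨σ ^ 2, sq_nonneg σ⟩ with hvdef
  have hv : v ≠ 0 := fun h => hσ2.ne' (congrArg NNReal.toReal h)
  have hvcoe : (v : ℝ) = σ ^ 2 := rfl
  set J : ℕ → ℝ := fun y => ∫ z, Real.exp (-Real.exp (μ + z)) * Real.exp ((μ + z) * y)
      / (y.factorial) ∂(gaussianReal 0 v) with hJ
  -- lintegrals of powers of the log-normal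
  have hlin : ∀ n : ℕ, ∫⁻ z, ENNReal.ofReal (Real.exp (μ + z) ^ n) ∂(gaussianReal 0 v)
      = ENNReal.ofReal (Real.exp ((n:ℝ) * μ + (n:ℝ) ^ 2 * σ ^ 2 / 2)) := by
    intro n
    have hpt : ∀ z : ℝ, Real.exp (μ + z) ^ n = Real.exp ((n:ℝ) * z + (n:ℝ) * μ) := by
      intro z
      rw [← Real.exp_nat_mul, show (n:ℝ) * (μ + z) = (n:ℝ) * z + (n:ℝ) * μ from by ring]
    simp_rw [hpt]
    rw [zipln_lintegral_exp v hv (n:ℝ) ((n:ℝ) * μ)]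
    congr 1
    rw [hvcoe]
    ring
  -- the three weighted sums of the integral part
  have hT1 : ∑' y : ℕ, (y:ℝ) * J y = Real.exp (μ + σ ^ 2 / 2) := by
    rw [zipln_tsum_eq μ v (fun y => (y:ℝ)) (fun y => Nat.cast_nonneg y) (fun x => x)
      (fun x _ => (zipln_mom1 x).1) (fun x _ => (zipln_mom1 x).2)]
    have h1 := hlin 1
    simp only [pow_one] at h1
    rw [h1, ENNReal.toReal_ofReal (Real.exp_nonneg _)]
    norm_num
  have hT2 : ∑' y : ℕ, (y:ℝ) ^ 2 * J y
      = Real.exp (μ + σ ^ 2 / 2) + Real.exp (2 * μ + 2 * σ ^ 2) := by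
    rw [zipln_tsum_eq μ v (fun y => (y:ℝ) ^ 2) (fun y => by positivity) (fun x => x + x ^ 2)
      (fun x _ => (zipln_mom2 x).1) (fun x _ => (zipln_mom2 x).2)]
    have hsplit : ∀ z : ℝ, ENNReal.ofReal (Real.exp (μ + z) + Real.exp (μ + z) ^ 2)
        = ENNReal.ofReal (Real.exp (μ + z) ^ 1) + ENNReal.ofReal (Real.exp (μ + z) ^ 2) := by
      intro z
      rw [ENNReal.ofReal_add (by positivity) (by positivity), pow_one]
    simp_rw [hsplit]
    rw [lintegral_add_left (by fun_prop), hlin 1, hlin 2,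
      ← ENNReal.ofReal_add (Real.exp_nonneg _) (Real.exp_nonneg _),
      ENNReal.toReal_ofReal (by positivity)]
    norm_num
    ring
  have hT3 : ∑' y : ℕ, (y:ℝ) ^ 3 * J y
      = Real.exp (μ + σ ^ 2 / 2) + 3 * Real.exp (2 * μ + 2 * σ ^ 2)
        + Real.exp (3 * μ + 9 * σ ^ 2 / 2) := by
    rw [zipln_tsum_eq μ v (fun y => (y:ℝ) ^ 3) (fun y => by positivity)
      (fun x => x + 3 * x ^ 2 + x ^ 3)
      (fun x _ => (zipln_mom3 x).1) (fun x _ => (zipln_mom3 x).2)]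
    have hsplit : ∀ z : ℝ, ENNReal.ofReal
          (Real.exp (μ + z) + 3 * Real.exp (μ + z) ^ 2 + Real.exp (μ + z) ^ 3)
        = ENNReal.ofReal (Real.exp (μ + z) ^ 1)
          + ENNReal.ofReal 3 * ENNReal.ofReal (Real.exp (μ + z) ^ 2)
          + ENNReal.ofReal (Real.exp (μ + z) ^ 3) := by
      intro z
      rw [ENNReal.ofReal_add (by positivity) (by positivity),
        ENNReal.ofReal_add (by positivity) (by positivity),
        ← ENNReal.ofReal_mul (by norm_num), pow_one]
    simp_rw [hsplit]
    rw [lintegral_add_left (by fun_prop), lintegral_add_left (by fun_prop),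
      lintegral_const_mul _ (by fun_prop), hlin 1, hlin 2, hlin 3,
      ← ENNReal.ofReal_mul (by norm_num),
      ← ENNReal.ofReal_add (Real.exp_nonneg _) (by positivity),
      ← ENNReal.ofReal_add (by positivity) (Real.exp_nonneg _),
      ENNReal.toReal_ofReal (by positivity)]
    norm_num
    ring
  -- the weighted sums of the pmf
  have hS1 : ∑' y : ℕ, (y:ℝ) * ziplnPMF pr μ σ y = pr * ∑' y : ℕ, (y:ℝ) * J y := by
    rw [← tsum_mul_left]
    refine tsum_congr fun y => ?_
    cases y with
    | zero => simp
    | succ n =>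
      show ((n+1 : ℕ):ℝ) * ziplnPMF pr μ σ (n+1) = pr * (((n+1:ℕ):ℝ) * J (n+1))
      unfold ziplnPMF
      rw [hJ]
      simp only [Nat.succ_ne_zero, if_false, mul_zero, zero_add]
      ring
  have hS2 : ∑' y : ℕ, (y:ℝ) ^ 2 * ziplnPMF pr μ σ y
      = pr * ∑' y : ℕ, (y:ℝ) ^ 2 * J y := by
    rw [← tsum_mul_left]
    refine tsum_congr fun y => ?_
    cases y with
    | zero => simp
    | succ n =>
      show ((n+1 : ℕ):ℝ) ^ 2 * ziplnPMF pr μ σ (n+1) = pr * (((n+1:ℕ):ℝ) ^ 2 * J (n+1))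
      unfold ziplnPMF
      rw [hJ]
      simp only [Nat.succ_ne_zero, if_false, mul_zero, zero_add]
      ring
  have hS3 : ∑' y : ℕ, (y:ℝ) ^ 3 * ziplnPMF pr μ σ y
      = pr * ∑' y : ℕ, (y:ℝ) ^ 3 * J y := by
    rw [← tsum_mul_left]
    refine tsum_congr fun y => ?_
    cases y with
    | zero => simp
    | succ n =>
      show ((n+1 : ℕ):ℝ) ^ 3 * ziplnPMF pr μ σ (n+1) = pr * (((n+1:ℕ):ℝ) ^ 3 * J (n+1))
      unfold ziplnPMF
      rw [hJ]
      simp only [Nat.succ_ne_zero, if_false, mul_zero, zero_add]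
      ring
  set a : ℝ := Real.exp (μ + σ ^ 2 / 2) with hadef
  set b : ℝ := Real.exp (2 * μ + 2 * σ ^ 2) with hbdef
  set c : ℝ := Real.exp (3 * μ + 9 * σ ^ 2 / 2) with hcdef
  have ha0 : 0 < a := Real.exp_pos _
  have hb0 : 0 < b := Real.exp_pos _
  have hc0 : 0 < c := Real.exp_pos _
  have hm' : m₁ = pr * a := by rw [hm₁, hS1, hT1]
  have hA2 : ∑' y : ℕ, (y:ℝ) ^ 2 * ziplnPMF pr μ σ y = pr * (a + b) := by
    rw [hS2, hT2]
  have hA3 : ∑' y : ℕ, (y:ℝ) ^ 3 * ziplnPMF pr μ σ y = pr * (a + 3 * b + c) := by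
    rw [hS3, hT3]
  have hQ1' : Q₁ = Real.exp (μ + 3 * σ ^ 2 / 2) := by
    rw [hQ₁, hA2, hm']
    have h1 : pr * (a + b) / (pr * a) - 1 = b / a := by
      field_simp
      ring
    rw [h1, hadef, hbdef, ← Real.exp_sub]
    congr 1
    ring
  have hQ2' : Q₂ = pr * c := by
    rw [hQ₂, hA3, hA2, ← hm₁, hm']
    ring
  refine ⟨?_, ?_, ?_⟩
  · rw [hQ2', hQ1']
    have h3A : Real.exp (μ + 3 * σ ^ 2 / 2) ^ 3 = c := by
      rw [← Real.exp_nat_mul, hcdef]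
      congr 1
      push_cast
      ring
    rw [h3A, mul_div_assoc, div_self hc0.ne', mul_one]
  · have h2A : Real.exp (μ + 3 * σ ^ 2 / 2) ^ 2 = Real.exp (2 * μ + 3 * σ ^ 2) := by
      rw [← Real.exp_nat_mul]
      congr 1
      push_cast
      ring
    have hkey : Q₂ / (Q₁ ^ 2 * m₁) = Real.exp (σ ^ 2) := by
      rw [hQ2', hQ1', hm', h2A]
      rw [div_eq_iff (by positivity)]
      rw [show Real.exp (σ ^ 2) * (Real.exp (2 * μ + 3 * σ ^ 2) * (pr * a))
          = pr * (Real.exp (σ ^ 2) * Real.exp (2 * μ + 3 * σ ^ 2) * a) from by ring,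
        hadef, hcdef, ← Real.exp_add, ← Real.exp_add]
      congr 2
      ring
    rw [hkey, Real.log_exp]
  · have hmQ : m₁ / Q₂ = Real.exp ((μ + σ ^ 2 / 2) - (3 * μ + 9 * σ ^ 2 / 2)) := by
      rw [hm', hQ2', mul_div_mul_left _ _ hp0.ne', hadef, hcdef, Real.exp_sub]
    rw [hQ1', hmQ, Real.log_exp, Real.log_exp]
    ring
end

section
/- Let (Y₁, Y₂) follow the bivariate zero-inflated Poisson log-normal model with parameters (π₁, π₂, μ₁, μ₂, c₁, c₂). Then the latent covariance parameter σ₁₂ = c₁·c₂ is recovered from the moments of (Y₁, Y₂) by σ₁₂ = log(Cov(Y₁, Y₂)/(E[Y₁]·E[Y₂]) + 1). -/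
/-!
Given the latent Gaussian vector `w`, the counts are independent zero-inflated Poisson variables
with conditional means `π_j e^{μ_j + c_j ⬝ᵥ w}`; by Tonelli every mixed moment of `(Y₁, Y₂)` is
the Gaussian integral of the product of the conditional moments. The Gaussian moment generating
function then gives `E[Y_j] = π_j e^{μ_j + |c_j|² / 2}` and
`E[Y₁ Y₂] = π₁ π₂ e^{μ₁ + μ₂ + |c₁ + c₂|² / 2}`, so that
`Cov / (E₁ E₂) + 1 = E[Y₁ Y₂] / (E₁ E₂) = e^{c₁ ⬝ᵥ c₂}`.
-/

open MeasureTheory ProbabilityTheory Real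

/-- The joint probability mass function of the bivariate zero-inflated Poisson
log-normal model with parameters (π₁, π₂, μ₁, μ₂, c₁, c₂):
`p(y₁, y₂) = ∫_{ℝ^q} ∏_{j=1,2} [(1−π_j)·1{y_j=0} +
  π_j·exp(−e^{μ_j + c_j·w})·e^{(μ_j + c_j·w)·y_j}/y_j!] dΓ(w)`,
where `Γ` is the q-fold product of standard Gaussian measures on ℝ.
Here `pr₁`, `pr₂` play the role of the probabilities π₁, π₂. -/
noncomputable def biziplnPMF {q : ℕ} (c₁ c₂ : Fin q → ℝ) (pr₁ pr₂ μ₁ μ₂ : ℝ)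
    (y₁ y₂ : ℕ) : ℝ :=
  ∫ w : Fin q → ℝ,
    ((1 - pr₁) * (if y₁ = 0 then 1 else 0) +
      pr₁ * (exp (-exp (μ₁ + ∑ i, c₁ i * w i)) * exp ((μ₁ + ∑ i, c₁ i * w i) * y₁)
        / (Nat.factorial y₁))) *
    ((1 - pr₂) * (if y₂ = 0 then 1 else 0) +
      pr₂ * (exp (-exp (μ₂ + ∑ i, c₂ i * w i)) * exp ((μ₂ + ∑ i, c₂ i * w i) * y₂)
        / (Nat.factorial y₂)))
    ∂(Measure.pi fun _ : Fin q => gaussianReal 0 1)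

namespace Bizipln

theorem hasSum_poisson (r : ℝ) :
    HasSum (fun n : ℕ => exp (-r) * r ^ n / n.factorial) 1 := by
  have h := (NormedSpace.expSeries_div_hasSum_exp r).mul_left (exp (-r))
  rw [← exp_eq_exp_ℝ, ← exp_add, neg_add_cancel, exp_zero] at h
  simpa only [mul_div_assoc] using h

theorem hasSum_mul_poisson (r : ℝ) :
    HasSum (fun n : ℕ => n * (exp (-r) * r ^ n / n.factorial)) r := by
  -- the `n = 0` term vanishes and `(n + 1) r ^ (n + 1) / (n + 1)! = r · r ^ n / n!`
  have h : HasSum (fun n : ℕ => ((n + 1 : ℕ) : ℝ) * (exp (-r) * r ^ (n + 1) / (n + 1).factorial))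
      r := by
    have h := (hasSum_poisson r).mul_left r
    rw [mul_one] at h
    refine h.congr_fun fun n => ?_
    have : (n.factorial : ℝ) ≠ 0 := by positivity
    rw [Nat.factorial_succ, Nat.cast_mul, pow_succ]
    field_simp
  have := (hasSum_nat_add_iff (f := fun n : ℕ => n * (exp (-r) * r ^ n / n.factorial)) 1).mp h
  simpa using this

noncomputable def zipPMF (pr m : ℝ) (y : ℕ) : ℝ :=
  (1 - pr) * (if y = 0 then 1 else 0) + pr * (exp (-exp m) * exp (m * y) / y.factorial)

theorem zipPMF_eq (pr m : ℝ) (y : ℕ) :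
    zipPMF pr m y =
      (1 - pr) * (if y = 0 then 1 else 0) + pr * (exp (-exp m) * exp m ^ y / y.factorial) := by
  rw [zipPMF, mul_comm m, exp_nat_mul]

theorem zipPMF_nonneg {pr : ℝ} (h₀ : 0 ≤ pr) (h₁ : pr ≤ 1) (m : ℝ) (y : ℕ) :
    0 ≤ zipPMF pr m y := by
  have : 0 ≤ 1 - pr := sub_nonneg.mpr h₁
  unfold zipPMF
  positivity

@[fun_prop]
theorem continuous_zipPMF (pr : ℝ) (y : ℕ) : Continuous fun m => zipPMF pr m y := by
  unfold zipPMF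
  fun_prop

theorem hasSum_zipPMF (pr m : ℝ) : HasSum (zipPMF pr m) 1 := by
  have h := (hasSum_ite_eq 0 (1 - pr)).add ((hasSum_poisson (exp m)).mul_left pr)
  rw [mul_one, sub_add_cancel] at h
  refine h.congr_fun fun y => ?_
  rw [zipPMF_eq, mul_ite, mul_one, mul_zero]

theorem hasSum_mul_zipPMF (pr m : ℝ) :
    HasSum (fun y : ℕ => y * zipPMF pr m y) (pr * exp m) := by
  refine ((hasSum_mul_poisson (exp m)).mul_left pr).congr_fun fun y => ?_
  rcases eq_or_ne y 0 with rfl | hy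
  · simp
  · rw [zipPMF_eq, if_neg hy]
    ring

section Gaussian

variable {ι : Type*} [Fintype ι]

theorem integral_exp_mul_gaussianReal (t : ℝ) :
    ∫ x, exp (t * x) ∂gaussianReal 0 1 = exp (t ^ 2 / 2) := by
  simpa [mgf] using congrFun (mgf_id_gaussianReal (μ := 0) (v := 1)) t

theorem exp_dotProduct_eq_prod (t w : ι → ℝ) : exp (t ⬝ᵥ w) = ∏ i, exp (t i * w i) :=
  exp_sum _ _

theorem integrable_exp_dotProduct_stdGaussian (t : ι → ℝ) :
    Integrable (fun w => exp (t ⬝ᵥ w)) (Measure.pi fun _ : ι => gaussianReal 0 1) := by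
  simp_rw [exp_dotProduct_eq_prod]
  exact Integrable.fintype_prod (f := fun i x => exp (t i * x))
    fun i => integrable_exp_mul_gaussianReal (t i)

theorem integral_exp_dotProduct_stdGaussian (t : ι → ℝ) :
    ∫ w, exp (t ⬝ᵥ w) ∂(Measure.pi fun _ : ι => gaussianReal 0 1) = exp (t ⬝ᵥ t / 2) := by
  simp_rw [exp_dotProduct_eq_prod,
    integral_fintype_prod_eq_prod (f := fun i x => exp (t i * x)),
    integral_exp_mul_gaussianReal, ← exp_sum, dotProduct, Finset.sum_div, sq]

theorem integral_mul_exp_add_dotProduct_stdGaussian (a μ : ℝ) (t : ι → ℝ) :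
    ∫ w, a * exp (μ + t ⬝ᵥ w) ∂(Measure.pi fun _ : ι => gaussianReal 0 1) =
      a * exp (μ + t ⬝ᵥ t / 2) := by
  simp_rw [exp_add, ← mul_assoc, integral_const_mul, integral_exp_dotProduct_stdGaussian]

theorem integrable_mul_exp_add_dotProduct_stdGaussian (a μ : ℝ) (t : ι → ℝ) :
    Integrable (fun w => a * exp (μ + t ⬝ᵥ w)) (Measure.pi fun _ : ι => gaussianReal 0 1) := by
  simp_rw [exp_add, ← mul_assoc]
  exact (integrable_exp_dotProduct_stdGaussian t).const_mul _

end Gaussian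

theorem hasSum_integral_mul_of_nonneg {α ι κ : Type*} [MeasurableSpace α] {ν : Measure α}
    [Countable ι] [Countable κ] {f : ι → α → ℝ} {g : κ → α → ℝ} {F G : α → ℝ}
    (hf₀ : ∀ i w, 0 ≤ f i w) (hg₀ : ∀ j w, 0 ≤ g j w)
    (hf_meas : ∀ i, AEStronglyMeasurable (f i) ν) (hg_meas : ∀ j, AEStronglyMeasurable (g j) ν)
    (hf : ∀ w, HasSum (f · w) (F w)) (hg : ∀ w, HasSum (g · w) (G w))
    (hFG : Integrable (fun w => F w * G w) ν) :
    HasSum (fun p : ι × κ => ∫ w, f p.1 w * g p.2 w ∂ν) (∫ w, F w * G w ∂ν) := by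
  have hfg : ∀ w, HasSum (fun p : ι × κ => f p.1 w * g p.2 w) (F w * G w) := fun w =>
    (hf w).mul (hg w) <|
      (hf w).summable.mul_of_nonneg (hg w).summable (fun i => hf₀ i w) fun j => hg₀ j w
  -- the terms, being nonnegative, serve as their own dominating series
  refine hasSum_integral_of_dominated_convergence (fun p w => f p.1 w * g p.2 w)
    (fun p => (hf_meas p.1).mul (hg_meas p.2)) (fun p => ae_of_all _ fun w => ?_)
    (ae_of_all _ fun w => (hfg w).summable) ?_ (ae_of_all _ hfg)
  · rw [Real.norm_of_nonneg (mul_nonneg (hf₀ _ _) (hg₀ _ _))]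
  · simpa only [fun w => (hfg w).tsum_eq] using hFG

section Moments

variable {q : ℕ} (c₁ c₂ : Fin q → ℝ) {pr₁ pr₂ : ℝ} (μ₁ μ₂ : ℝ)

local notation "Γ" => Measure.pi fun _ : Fin q => gaussianReal 0 1

theorem biziplnPMF_eq_integral (y₁ y₂ : ℕ) :
    biziplnPMF c₁ c₂ pr₁ pr₂ μ₁ μ₂ y₁ y₂ =
      ∫ w, zipPMF pr₁ (μ₁ + c₁ ⬝ᵥ w) y₁ * zipPMF pr₂ (μ₂ + c₂ ⬝ᵥ w) y₂ ∂Γ :=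
  rfl

variable {c₁ c₂ μ₁ μ₂} in
theorem hasSum_mul_mul_biziplnPMF (hpr₁ : 0 ≤ pr₁) (hpr₁' : pr₁ ≤ 1) (hpr₂ : 0 ≤ pr₂)
    (hpr₂' : pr₂ ≤ 1) {u₁ u₂ : ℕ → ℝ} (hu₁ : 0 ≤ u₁) (hu₂ : 0 ≤ u₂) {U₁ U₂ : ℝ → ℝ}
    (hU₁ : ∀ m, HasSum (fun y => u₁ y * zipPMF pr₁ m y) (U₁ m))
    (hU₂ : ∀ m, HasSum (fun y => u₂ y * zipPMF pr₂ m y) (U₂ m))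
    (hint : Integrable (fun w => U₁ (μ₁ + c₁ ⬝ᵥ w) * U₂ (μ₂ + c₂ ⬝ᵥ w)) Γ) :
    HasSum (fun y : ℕ × ℕ => u₁ y.1 * u₂ y.2 * biziplnPMF c₁ c₂ pr₁ pr₂ μ₁ μ₂ y.1 y.2)
      (∫ w, U₁ (μ₁ + c₁ ⬝ᵥ w) * U₂ (μ₂ + c₂ ⬝ᵥ w) ∂Γ) := by
  have h := hasSum_integral_mul_of_nonneg (ν := Γ)
    (f := fun y w => u₁ y * zipPMF pr₁ (μ₁ + c₁ ⬝ᵥ w) y)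
    (g := fun y w => u₂ y * zipPMF pr₂ (μ₂ + c₂ ⬝ᵥ w) y)
    (fun y w => mul_nonneg (hu₁ y) (zipPMF_nonneg hpr₁ hpr₁' _ y))
    (fun y w => mul_nonneg (hu₂ y) (zipPMF_nonneg hpr₂ hpr₂' _ y))
    (fun y => by fun_prop) (fun y => by fun_prop)
    (fun w => hU₁ _) (fun w => hU₂ _) hint
  refine h.congr_fun fun y => ?_
  rw [biziplnPMF_eq_integral, ← integral_const_mul]
  congr 1 with w
  ring

theorem tsum_fst_mul_biziplnPMF (hpr₁ : 0 ≤ pr₁) (hpr₁' : pr₁ ≤ 1) (hpr₂ : 0 ≤ pr₂)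
    (hpr₂' : pr₂ ≤ 1) :
    ∑' y : ℕ × ℕ, (y.1 : ℝ) * biziplnPMF c₁ c₂ pr₁ pr₂ μ₁ μ₂ y.1 y.2 =
      pr₁ * exp (μ₁ + c₁ ⬝ᵥ c₁ / 2) := by
  have h := hasSum_mul_mul_biziplnPMF (c₁ := c₁) (c₂ := c₂) (μ₁ := μ₁) (μ₂ := μ₂)
    (u₂ := fun _ => 1) (U₂ := fun _ => 1) hpr₁ hpr₁' hpr₂ hpr₂' (fun y => y.cast_nonneg)
    (fun _ => zero_le_one) (hasSum_mul_zipPMF pr₁)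
    (fun m => by simpa only [one_mul] using hasSum_zipPMF pr₂ m)
    (by simpa only [mul_one] using integrable_mul_exp_add_dotProduct_stdGaussian pr₁ μ₁ c₁)
  simp only [mul_one, integral_mul_exp_add_dotProduct_stdGaussian] at h
  exact h.tsum_eq

theorem tsum_snd_mul_biziplnPMF (hpr₁ : 0 ≤ pr₁) (hpr₁' : pr₁ ≤ 1) (hpr₂ : 0 ≤ pr₂)
    (hpr₂' : pr₂ ≤ 1) :
    ∑' y : ℕ × ℕ, (y.2 : ℝ) * biziplnPMF c₁ c₂ pr₁ pr₂ μ₁ μ₂ y.1 y.2 =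
      pr₂ * exp (μ₂ + c₂ ⬝ᵥ c₂ / 2) := by
  have h := hasSum_mul_mul_biziplnPMF (c₁ := c₁) (c₂ := c₂) (μ₁ := μ₁) (μ₂ := μ₂)
    (u₁ := fun _ => 1) (U₁ := fun _ => 1) hpr₁ hpr₁' hpr₂ hpr₂' (fun _ => zero_le_one)
    (fun y => y.cast_nonneg) (fun m => by simpa only [one_mul] using hasSum_zipPMF pr₁ m)
    (hasSum_mul_zipPMF pr₂)
    (by simpa only [one_mul] using integrable_mul_exp_add_dotProduct_stdGaussian pr₂ μ₂ c₂)
  simp only [one_mul, integral_mul_exp_add_dotProduct_stdGaussian] at h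
  exact h.tsum_eq

theorem tsum_fst_mul_snd_mul_biziplnPMF (hpr₁ : 0 ≤ pr₁) (hpr₁' : pr₁ ≤ 1) (hpr₂ : 0 ≤ pr₂)
    (hpr₂' : pr₂ ≤ 1) :
    ∑' y : ℕ × ℕ, (y.1 : ℝ) * (y.2 : ℝ) * biziplnPMF c₁ c₂ pr₁ pr₂ μ₁ μ₂ y.1 y.2 =
      pr₁ * pr₂ * exp (μ₁ + μ₂ + (c₁ + c₂) ⬝ᵥ (c₁ + c₂) / 2) := by
  have hmix : (fun w => pr₁ * exp (μ₁ + c₁ ⬝ᵥ w) * (pr₂ * exp (μ₂ + c₂ ⬝ᵥ w))) =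
      fun w => pr₁ * pr₂ * exp (μ₁ + μ₂ + (c₁ + c₂) ⬝ᵥ w) := by
    funext w
    rw [mul_mul_mul_comm, ← exp_add, add_dotProduct, add_add_add_comm]
  have h := hasSum_mul_mul_biziplnPMF (c₁ := c₁) (c₂ := c₂) (μ₁ := μ₁) (μ₂ := μ₂)
    hpr₁ hpr₁' hpr₂ hpr₂' (fun y => y.cast_nonneg) (fun y => y.cast_nonneg)
    (hasSum_mul_zipPMF pr₁) (hasSum_mul_zipPMF pr₂)
    (hmix ▸ integrable_mul_exp_add_dotProduct_stdGaussian _ _ _)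
  rw [hmix, integral_mul_exp_add_dotProduct_stdGaussian] at h
  exact h.tsum_eq

end Moments

end Bizipln

open Bizipln in
theorem bizipln_sigma12_recovery_general {q : ℕ} (c₁ c₂ : Fin q → ℝ)
    (pr₁ pr₂ μ₁ μ₂ : ℝ)
    (hpr₁ : pr₁ ∈ Set.Ioc (0 : ℝ) 1) (hpr₂ : pr₂ ∈ Set.Ioc (0 : ℝ) 1)
    (E₁ E₂ cov : ℝ)
    (hE₁ : E₁ = ∑' y : ℕ × ℕ, (y.1 : ℝ) * biziplnPMF c₁ c₂ pr₁ pr₂ μ₁ μ₂ y.1 y.2)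
    (hE₂ : E₂ = ∑' y : ℕ × ℕ, (y.2 : ℝ) * biziplnPMF c₁ c₂ pr₁ pr₂ μ₁ μ₂ y.1 y.2)
    (hcov : cov = (∑' y : ℕ × ℕ,
        (y.1 : ℝ) * (y.2 : ℝ) * biziplnPMF c₁ c₂ pr₁ pr₂ μ₁ μ₂ y.1 y.2) - E₁ * E₂) :
    ∑ i, c₁ i * c₂ i = Real.log (cov / (E₁ * E₂) + 1) := by
  obtain ⟨hpr₁, hpr₁'⟩ := hpr₁
  obtain ⟨hpr₂, hpr₂'⟩ := hpr₂
  rw [tsum_fst_mul_biziplnPMF _ _ _ _ hpr₁.le hpr₁' hpr₂.le hpr₂'] at hE₁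
  rw [tsum_snd_mul_biziplnPMF _ _ _ _ hpr₁.le hpr₁' hpr₂.le hpr₂'] at hE₂
  rw [tsum_fst_mul_snd_mul_biziplnPMF _ _ _ _ hpr₁.le hpr₁' hpr₂.le hpr₂'] at hcov
  have hE : E₁ * E₂ ≠ 0 := by rw [hE₁, hE₂]; positivity
  have hexponent : μ₁ + μ₂ + (c₁ + c₂) ⬝ᵥ (c₁ + c₂) / 2 =
      (μ₁ + c₁ ⬝ᵥ c₁ / 2) + (μ₂ + c₂ ⬝ᵥ c₂ / 2) + c₁ ⬝ᵥ c₂ := by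
    rw [add_dotProduct, dotProduct_add, dotProduct_add, dotProduct_comm c₂ c₁]
    ring
  have hratio : cov / (E₁ * E₂) + 1 = exp (c₁ ⬝ᵥ c₂) := by
    rw [hcov, sub_div, div_self hE, sub_add_cancel, div_eq_iff hE, hexponent, exp_add, exp_add,
      hE₁, hE₂]
    ring
  rw [hratio, log_exp]
  rfl

/-- In the bivariate zero-inflated Poisson log-normal model, the latent covariance
parameter `σ₁₂ = c₁·c₂` is recovered from the moments of (Y₁, Y₂) by
`σ₁₂ = log(Cov(Y₁, Y₂)/(E[Y₁]·E[Y₂]) + 1)`. -/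
theorem bizipln_sigma12_recovery {q : ℕ} (hq : 1 ≤ q) (c₁ c₂ : Fin q → ℝ)
    (pr₁ pr₂ μ₁ μ₂ : ℝ)
    (hpr₁ : pr₁ ∈ Set.Ioc (0 : ℝ) 1) (hpr₂ : pr₂ ∈ Set.Ioc (0 : ℝ) 1)
    (E₁ E₂ cov : ℝ)
    (hE₁ : E₁ = ∑' y : ℕ × ℕ, (y.1 : ℝ) * biziplnPMF c₁ c₂ pr₁ pr₂ μ₁ μ₂ y.1 y.2)
    (hE₂ : E₂ = ∑' y : ℕ × ℕ, (y.2 : ℝ) * biziplnPMF c₁ c₂ pr₁ pr₂ μ₁ μ₂ y.1 y.2)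
    (hcov : cov = (∑' y : ℕ × ℕ,
        (y.1 : ℝ) * (y.2 : ℝ) * biziplnPMF c₁ c₂ pr₁ pr₂ μ₁ μ₂ y.1 y.2) - E₁ * E₂) :
    ∑ i, c₁ i * c₂ i = Real.log (cov / (E₁ * E₂) + 1) :=
  bizipln_sigma12_recovery_general c₁ c₂ pr₁ pr₂ μ₁ μ₂ hpr₁ hpr₂ E₁ E₂ cov hE₁ hE₂ hcov
end

section
/- Uniqueness of low-rank positive semidefinite completion from overlapping principal blocks: let p, q, r be positive integers, let Σ and Σ′ be real p×p positive semidefinite matrices with rank(Σ) ≤ q and rank(Σ′) ≤ q, and let J₁, …, J_r be subsets of {1, …, p} whose union is {1, …, p}. For 2 ≤ ℓ ≤ r put ς_ℓ = J_ℓ ∩ (J₁ ∪ ⋯ ∪ J_{ℓ−1}), and assume that for each such ℓ the principal submatrix (Σ_{jk})_{(j,k) ∈ ς_ℓ × ς_ℓ} has rank at least q. If Σ_{jk} = Σ′_{jk} for every pair (j,k) belonging to ⋃_{ℓ=1}^r J_ℓ × J_ℓ, then Σ = Σ′. -/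
/-!
If the principal block of `S` on `σ ⊆ U ∩ V` already has the rank of `S`, then the columns of
`S` indexed by `σ` span its column space, so for `y ∈ V` there is `w` supported on `σ` with
`S w = S eᵧ`. The vector `v = w - eᵧ` is supported in `V` and `S v = 0`; as `S` and `T` agree
on `V × V`, `v⋆ T v = v⋆ S v = 0`, and positivity of `T` forces `T v = 0`. For `x ∈ U` the
matrices agree on `{x} × σ`, so `S x y = (S w) x = (T w) x = T x y`. Thus agreement on `U × U`
and on `V × V` glues to agreement on `(U ∪ V) × (U ∪ V)`, and the theorem follows by adding
the blocks `J ℓ` one at a time.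
-/

open Matrix Finset
open scoped ComplexOrder

namespace Matrix

theorem exists_mulVec_eq_of_rank_le_rank_submatrix {m m' n K : Type*} [Field K] [Fintype n]
    [DecidableEq n] (A : Matrix m n K) (f : m' → m) (σ : Finset n)
    (h : A.rank ≤ (A.submatrix f ((↑) : σ → n)).rank) (u : n → K) :
    ∃ w : n → K, (∀ i ∉ σ, w i = 0) ∧ A *ᵥ w = A *ᵥ u := by
  set B := A.submatrix id ((↑) : σ → n)
  have hcols : Submodule.span K (Set.range B.col) = Submodule.span K (Set.range A.col) := by
    have : FiniteDimensional K (Submodule.span K (Set.range A.col)) :=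
      FiniteDimensional.span_of_finite K (Set.finite_range _)
    refine Submodule.eq_of_le_of_finrank_le (Submodule.span_mono ?_) ?_
    · rintro _ ⟨i, rfl⟩
      exact ⟨i, rfl⟩
    · rw [← rank_eq_finrank_span_cols, ← rank_eq_finrank_span_cols]
      exact h.trans (B.rank_submatrix_le f id)
  have hu : A *ᵥ u ∈ Submodule.span K (Set.range B.col) := by
    rw [hcols, ← range_mulVecLin]
    exact LinearMap.mem_range_self _ u
  obtain ⟨c, hc⟩ := (Submodule.mem_span_range_iff_exists_fun K).mp hu
  refine ⟨∑ i, c i • Pi.single (i : n) 1, fun j hj => ?_, ?_⟩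
  · simp only [Finset.sum_apply, Pi.smul_apply, Pi.single_apply]
    exact Finset.sum_eq_zero fun i _ => by
      rw [if_neg (ne_of_mem_of_not_mem i.2 hj).symm, smul_zero]
  · rw [← hc]
    simp only [mulVec_sum, mulVec_smul, mulVec_single_one]
    rfl

def EqOnBlock {n α : Type*} (S T : Matrix n n α) (s : Finset n) : Prop :=
  ∀ j k, j ∈ s → k ∈ s → S j k = T j k

section Blocks

variable {n : Type*} [Fintype n] {s : Finset n}

theorem EqOnBlock.dotProduct_mulVec {α : Type*} [NonUnitalNonAssocSemiring α]
    {S T : Matrix n n α} (hST : S.EqOnBlock T s) {v w : n → α} (hw : ∀ i ∉ s, w i = 0)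
    (hv : ∀ i ∉ s, v i = 0) : w ⬝ᵥ S *ᵥ v = w ⬝ᵥ T *ᵥ v := by
  simp only [dotProduct, mulVec, Finset.mul_sum]
  refine Finset.sum_congr rfl fun j _ => Finset.sum_congr rfl fun k _ => ?_
  by_cases hj : j ∈ s
  · by_cases hk : k ∈ s
    · rw [hST j k hj hk]
    · simp [hv k hk]
  · simp [hw j hj]

variable {𝕜 : Type*} [RCLike 𝕜] {S T : Matrix n n 𝕜}

theorem PosSemidef.mulVec_eq_zero_of_eqOnBlock (hT : T.PosSemidef) (hST : S.EqOnBlock T s)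
    {v : n → 𝕜} (hv : ∀ i ∉ s, v i = 0) (hSv : S *ᵥ v = 0) : T *ᵥ v = 0 := by
  have hstar : ∀ i ∉ s, star v i = 0 := fun i hi => by rw [Pi.star_apply, hv i hi, star_zero]
  rw [← hT.dotProduct_mulVec_zero_iff, ← hST.dotProduct_mulVec hstar hv, hSv, dotProduct_zero]

theorem PosSemidef.eqOnBlock_union [DecidableEq n] (hS : S.PosSemidef) (hT : T.PosSemidef)
    {U V σ : Finset n} (hσU : σ ⊆ U) (hσV : σ ⊆ V)
    (hrank : S.rank ≤ (S.submatrix ((↑) : σ → n) ((↑) : σ → n)).rank)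
    (hU : S.EqOnBlock T U) (hV : S.EqOnBlock T V) : S.EqOnBlock T (U ∪ V) := by
  have cross : ∀ x y, x ∈ U → y ∈ V → S x y = T x y := by
    intro x y hx hy
    obtain ⟨w, hwσ, hSw⟩ :=
      S.exists_mulVec_eq_of_rank_le_rank_submatrix _ σ hrank (Pi.single y 1)
    have hvV : ∀ i ∉ V, (w - Pi.single y 1 : n → 𝕜) i = 0 := fun i hi => by
      rw [Pi.sub_apply, hwσ i (fun h => hi (hσV h)),
        Pi.single_eq_of_ne (ne_of_mem_of_not_mem hy hi).symm, sub_zero]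
    have hTw : T *ᵥ w = T *ᵥ Pi.single y 1 := by
      rw [← sub_eq_zero, ← mulVec_sub]
      exact hT.mulVec_eq_zero_of_eqOnBlock hV hvV (by rw [mulVec_sub, hSw, sub_self])
    have hxU : ∀ i ∉ U, (Pi.single x 1 : n → 𝕜) i = 0 := fun i hi =>
      Pi.single_eq_of_ne (ne_of_mem_of_not_mem hx hi).symm 1
    have hrow := hU.dotProduct_mulVec hxU (fun i hi => hwσ i (fun h => hi (hσU h)))
    rw [single_dotProduct, single_dotProduct, one_mul, one_mul, hSw, hTw] at hrow
    simpa [mulVec_single_one] using hrow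
  intro x y hx hy
  rcases mem_union.mp hx with hxU | hxV <;> rcases mem_union.mp hy with hyU | hyV
  · exact hU x y hxU hyU
  · exact cross x y hxU hyV
  · rw [← hS.isHermitian.apply, ← hT.isHermitian.apply, cross y x hyU hxV]
  · exact hV x y hxV hyV

end Blocks

section Chains

variable {ι n α : Type*} [LinearOrder ι] [LocallyFiniteOrderBot ι] [DecidableEq n]
  {S T : Matrix n n α} {J : ι → Finset n}

theorem eqOnBlock_biUnion_of_forall_Iic {s : Finset ι}
    (h : ∀ ℓ ∈ s, S.EqOnBlock T ((Iic ℓ).biUnion J)) : S.EqOnBlock T (s.biUnion J) := by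
  intro j k hj hk
  obtain ⟨a, ha, hja⟩ := mem_biUnion.mp hj
  obtain ⟨b, hb, hkb⟩ := mem_biUnion.mp hk
  have hmax : max a b ∈ s := by rcases max_choice a b with h | h <;> rw [h] <;> assumption
  exact h (max a b) hmax j k (mem_biUnion.mpr ⟨a, mem_Iic.mpr (le_max_left a b), hja⟩)
    (mem_biUnion.mpr ⟨b, mem_Iic.mpr (le_max_right a b), hkb⟩)

theorem eqOnBlock_biUnion_of_step [WellFoundedLT ι]
    (hstep : ∀ ℓ, S.EqOnBlock T ((Iio ℓ).biUnion J) →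
      S.EqOnBlock T (J ℓ ∪ (Iio ℓ).biUnion J))
    (s : Finset ι) : S.EqOnBlock T (s.biUnion J) := by
  suffices h : ∀ ℓ, S.EqOnBlock T ((Iic ℓ).biUnion J) from
    eqOnBlock_biUnion_of_forall_Iic fun ℓ _ => h ℓ
  intro ℓ
  induction ℓ using WellFoundedLT.induction with
  | _ ℓ ih =>
    rw [← Iio_insert, biUnion_insert]
    exact hstep ℓ (eqOnBlock_biUnion_of_forall_Iic fun m hm => ih m (mem_Iio.mp hm))

end Chains

end Matrix

theorem low_rank_psd_completion_unique_general
    (p q r : ℕ)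
    (S T : Matrix (Fin p) (Fin p) ℝ)
    (hS : S.PosSemidef) (hT : T.PosSemidef)
    (hrank : S.rank ≤ q)
    (J : Fin r → Finset (Fin p))
    (hcover : (univ : Finset (Fin r)).biUnion J = (univ : Finset (Fin p)))
    (ς : Fin r → Finset (Fin p))
    (hς : ∀ ℓ : Fin r, ς ℓ = J ℓ ∩ (Finset.Iio ℓ).biUnion J)
    (hblockrank : ∀ ℓ : Fin r, 0 < (ℓ : ℕ) →
      q ≤ (S.submatrix (fun a : {x // x ∈ ς ℓ} => (a : Fin p))
            (fun a : {x // x ∈ ς ℓ} => (a : Fin p))).rank)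
    (hagree : ∀ ℓ : Fin r, ∀ j k : Fin p, j ∈ J ℓ → k ∈ J ℓ → S j k = T j k) :
    S = T := by
  have hstep (ℓ : Fin r) (hprev : S.EqOnBlock T ((Iio ℓ).biUnion J)) :
      S.EqOnBlock T (J ℓ ∪ (Iio ℓ).biUnion J) := by
    rcases Nat.eq_zero_or_pos ℓ with hℓ | hℓ
    · have hmin : IsMin ℓ := fun m _ => Fin.le_def.mpr (by omega)
      rw [hmin.finsetIio_eq, biUnion_empty, union_empty]
      exact hagree ℓ
    · rw [union_comm]
      exact hS.eqOnBlock_union hT (hς ℓ ▸ inter_subset_right) (hς ℓ ▸ inter_subset_left)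
        (hrank.trans (hblockrank ℓ hℓ)) hprev (hagree ℓ)
  have hall := eqOnBlock_biUnion_of_step hstep univ
  rw [hcover] at hall
  ext j k
  exact hall j k (mem_univ j) (mem_univ k)

/-- Uniqueness of low-rank positive semidefinite completion from overlapping principal
blocks: if two p×p PSD matrices of rank ≤ q agree on all blocks `J ℓ × J ℓ` of a family
of subsets covering `{1, …, p}`, and for each ℓ ≥ 2 (0-indexed: `0 < ℓ`) the principal
submatrix of S indexed by `ς ℓ = J ℓ ∩ (J 0 ∪ ⋯ ∪ J (ℓ−1))` has rank at least q, then
the two matrices are equal. -/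
theorem low_rank_psd_completion_unique
    (p q r : ℕ) (hp : 0 < p) (hq : 0 < q) (hr : 0 < r)
    (S T : Matrix (Fin p) (Fin p) ℝ)
    (hS : S.PosSemidef) (hT : T.PosSemidef)
    (hrank : S.rank ≤ q) (hrank' : T.rank ≤ q)
    (J : Fin r → Finset (Fin p))
    (hcover : (univ : Finset (Fin r)).biUnion J = (univ : Finset (Fin p)))
    (ς : Fin r → Finset (Fin p))
    (hς : ∀ ℓ : Fin r, ς ℓ = J ℓ ∩ (Finset.Iio ℓ).biUnion J)
    (hblockrank : ∀ ℓ : Fin r, 0 < (ℓ : ℕ) →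
      q ≤ (S.submatrix (fun a : {x // x ∈ ς ℓ} => (a : Fin p))
            (fun a : {x // x ∈ ς ℓ} => (a : Fin p))).rank)
    (hagree : ∀ ℓ : Fin r, ∀ j k : Fin p, j ∈ J ℓ → k ∈ J ℓ → S j k = T j k) :
    S = T :=
  low_rank_psd_completion_unique_general p q r S T hS hT hrank J hcover ς hς hblockrank hagree
end
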